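/- Let f, ξ, η, ζ be C^∞ on an open set D ⊆ ℝ² and satisfy the infinitesimal-flex equations ξ_u = −f_u ζ_u, ξ_v + η_u = −f_v ζ_u − f_u ζ_v, η_v = −f_v ζ_v on D. For t ∈ ℝ let φ_t(u,v) = (u + tξ, v + tη, f + tζ) and let n(u,v,t) = (φ_u × φ_v)/‖φ_u × φ_v‖ be the unit normal. Define m(u,v) = (∂n/∂t)(u,v,0) × n(u,v,0). Then at every point of D, m(u,v) = (1 + f_u² + f_v²)^{−1} · ( f_u ξ_v + f_v η_v − ζ_v, −f_u ξ_u − f_v η_u + ζ_u, −(f_u² + f_v²) η_u + f_v ζ_u − f_u (1 + f_u² + f_v²) ζ_v ). -/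

import Mathlib

noncomputable section
open scoped RealInnerProductSpace

/-- ℝ³ with the Euclidean norm and scalar product. -/
abbrev E3 := EuclideanSpace ℝ (Fin 3)

/-- The vector (a, b, c) ∈ ℝ³. -/
def vec3 (a b c : ℝ) : E3 := (WithLp.equiv 2 (Fin 3 → ℝ)).symm ![a, b, c]

/-- The cross product in ℝ³. -/
def cross3 (x y : E3) : E3 :=
  vec3 (x 1 * y 2 - x 2 * y 1) (x 2 * y 0 - x 0 * y 2) (x 0 * y 1 - x 1 * y 0)

/-- Partial derivative in the first variable `u`. -/
def pu {F : Type*} [NormedAddCommGroup F] [NormedSpace ℝ F] (g : ℝ × ℝ → F) (z : ℝ × ℝ) : F :=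
  fderiv ℝ g z (1, 0)

/-- Partial derivative in the second variable `v`. -/
def pv {F : Type*} [NormedAddCommGroup F] [NormedSpace ℝ F] (g : ℝ × ℝ → F) (z : ℝ × ℝ) : F :=
  fderiv ℝ g z (0, 1)

/-- The infinitesimal-flex equations (3): ξ_u = −f_u ζ_u,
ξ_v + η_u = −f_v ζ_u − f_u ζ_v, η_v = −f_v ζ_v. -/
def FlexEqns (f ξ η ζ : ℝ × ℝ → ℝ) (z : ℝ × ℝ) : Prop :=
  pu ξ z = -(pu f z * pu ζ z) ∧
  pv ξ z + pu η z = -(pv f z * pu ζ z) - pu f z * pv ζ z ∧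
  pv η z = -(pv f z * pv ζ z)
@[simp] lemma vec3_apply0 (a b c : ℝ) : vec3 a b c 0 = a := rfl
@[simp] lemma vec3_apply1 (a b c : ℝ) : vec3 a b c 1 = b := rfl
@[simp] lemma vec3_apply2 (a b c : ℝ) : vec3 a b c 2 = c := rfl

lemma vec3_congr {a b c a' b' c' : ℝ} (h1 : a = a') (h2 : b = b') (h3 : c = c') :
    vec3 a b c = vec3 a' b' c' := by rw [h1, h2, h3]

lemma vec3_basis (a b c : ℝ) :
    vec3 a b c = a • vec3 1 0 0 + b • vec3 0 1 0 + c • vec3 0 0 1 := by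
  ext i
  fin_cases i <;>
    simp [vec3, PiLp.add_apply, PiLp.smul_apply, WithLp.equiv_symm_apply]

lemma cross3_vec3 (a b c d e g : ℝ) :
    cross3 (vec3 a b c) (vec3 d e g) = vec3 (b*g - c*e) (c*d - a*g) (a*e - b*d) := by
  simp [cross3]

lemma cross3_add_left (x y z : E3) :
    cross3 (x + y) z = cross3 x z + cross3 y z := by
  ext i
  fin_cases i <;> simp [cross3, PiLp.add_apply] <;> ring

lemma cross3_smul_left (r : ℝ) (x z : E3) :
    cross3 (r • x) z = r • cross3 x z := by
  ext i
  fin_cases i <;> simp [cross3, PiLp.smul_apply] <;> ring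

lemma cross3_smul_right (r : ℝ) (x z : E3) :
    cross3 x (r • z) = r • cross3 x z := by
  ext i
  fin_cases i <;> simp [cross3, PiLp.smul_apply] <;> ring

lemma cross3_self (x : E3) : cross3 x x = 0 := by
  ext i
  fin_cases i <;> simp [cross3] <;> ring

lemma norm_vec3_sq (a b c : ℝ) : ‖vec3 a b c‖ ^ 2 = a ^ 2 + b ^ 2 + c ^ 2 := by
  rw [EuclideanSpace.norm_eq, Real.sq_sqrt (by positivity)]
  simp [Fin.sum_univ_three, Real.norm_eq_abs, sq_abs]

lemma hasDerivAt_vec3 {a b c : ℝ → ℝ} {a' b' c' : ℝ} {t : ℝ}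
    (ha : HasDerivAt a a' t) (hb : HasDerivAt b b' t) (hc : HasDerivAt c c' t) :
    HasDerivAt (fun s => vec3 (a s) (b s) (c s)) (vec3 a' b' c') t := by
  have e : (fun s => vec3 (a s) (b s) (c s))
      = fun s => a s • vec3 1 0 0 + b s • vec3 0 1 0 + c s • vec3 0 0 1 :=
    funext fun s => vec3_basis _ _ _
  rw [e, vec3_basis a' b' c']
  exact ((ha.smul_const _).add (hb.smul_const _)).add (hc.smul_const _)

lemma fderiv_vec3_apply {a b c : ℝ × ℝ → ℝ} {z w : ℝ × ℝ}
    (ha : DifferentiableAt ℝ a z) (hb : DifferentiableAt ℝ b z)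
    (hc : DifferentiableAt ℝ c z) :
    fderiv ℝ (fun q => vec3 (a q) (b q) (c q)) z w
      = vec3 (fderiv ℝ a z w) (fderiv ℝ b z w) (fderiv ℝ c z w) := by
  have e : (fun q => vec3 (a q) (b q) (c q))
      = fun q => a q • vec3 1 0 0 + b q • vec3 0 1 0 + c q • vec3 0 0 1 :=
    funext fun q => vec3_basis _ _ _
  have H : HasFDerivAt (fun q => vec3 (a q) (b q) (c q))
      (((fderiv ℝ a z).smulRight (vec3 1 0 0) + (fderiv ℝ b z).smulRight (vec3 0 1 0))
        + (fderiv ℝ c z).smulRight (vec3 0 0 1)) z := by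
    rw [e]
    exact ((ha.hasFDerivAt.smul_const _).add (hb.hasFDerivAt.smul_const _)).add
      (hc.hasFDerivAt.smul_const _)
  rw [H.fderiv, vec3_basis (fderiv ℝ a z w) (fderiv ℝ b z w) (fderiv ℝ c z w)]
  simp [ContinuousLinearMap.add_apply, ContinuousLinearMap.smulRight_apply]

lemma hasDerivAt_quad (a b k : ℝ) :
    HasDerivAt (fun t : ℝ => a + b * t + k * (t * t)) b 0 := by
  have h1 := hasDerivAt_id (0 : ℝ)
  have h := ((hasDerivAt_const (0:ℝ) a).add (h1.const_mul b)).add ((h1.mul h1).const_mul k)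
  exact HasDerivAt.congr_deriv (f := fun t : ℝ => a + b * t + k * (t * t)) h (by simp)

lemma m_formula (c : ℝ → E3) (c' : E3) (h : HasDerivAt c c' 0) (h0 : c 0 ≠ 0) :
    cross3 (deriv (fun t => ‖c t‖⁻¹ • c t) 0) (‖c 0‖⁻¹ • c 0)
      = (‖c 0‖ ^ 2)⁻¹ • cross3 c' (c 0) := by
  have hn0 : ‖c 0‖ ≠ 0 := norm_ne_zero_iff.mpr h0
  have hS : HasDerivAt (fun t => (⟪c t, c t⟫ : ℝ)) (⟪c 0, c'⟫ + ⟪c', c 0⟫) 0 :=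
    h.inner ℝ h
  have hS0 : (⟪c 0, c 0⟫ : ℝ) ≠ 0 := inner_self_ne_zero.mpr h0
  have hsqrt : HasDerivAt (fun t => Real.sqrt ⟪c t, c t⟫)
      ((1 / (2 * Real.sqrt ⟪c 0, c 0⟫)) * (⟪c 0, c'⟫ + ⟪c', c 0⟫)) 0 :=
    (Real.hasDerivAt_sqrt hS0).comp 0 hS
  have enorm : (fun t => ‖c t‖) = fun t => Real.sqrt ⟪c t, c t⟫ := by
    funext t
    rw [real_inner_self_eq_norm_sq, Real.sqrt_sq (norm_nonneg _)]
  have hnorm : HasDerivAt (fun t => ‖c t‖)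
      ((1 / (2 * Real.sqrt ⟪c 0, c 0⟫)) * (⟪c 0, c'⟫ + ⟪c', c 0⟫)) 0 := by
    rw [enorm]; exact hsqrt
  have hinv := hnorm.inv hn0
  have hfinal := hinv.smul h
  rw [show (fun t => ‖c t‖⁻¹ • c t) = ((fun t => ‖c t‖)⁻¹ • c) from rfl,
    hfinal.deriv, cross3_add_left, cross3_smul_left, cross3_smul_left,
    cross3_smul_right, cross3_smul_right, cross3_self, smul_zero, smul_zero,
    add_zero, smul_smul]
  congr 1
  rw [sq, mul_inv]
  rfl

/-- for a smooth infinitesimal flex (ξ,η,ζ) of the graph of f, the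
field m = (∂n/∂t)(·,0) × n(·,0) built from the unit normal n of the deformed
surfaces φ_t = (u+tξ, v+tη, f+tζ) is given on D by
m = (1+f_u²+f_v²)⁻¹ (f_u ξ_v + f_v η_v − ζ_v, −f_u ξ_u − f_v η_u + ζ_u,
−(f_u²+f_v²) η_u + f_v ζ_u − f_u (1+f_u²+f_v²) ζ_v). -/
theorem stmt5 (D : Set (ℝ × ℝ)) (hD : IsOpen D)
    (f ξ η ζ : ℝ × ℝ → ℝ)
    (hf : ContDiffOn ℝ (⊤ : ℕ∞) f D) (hξ : ContDiffOn ℝ (⊤ : ℕ∞) ξ D)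
    (hη : ContDiffOn ℝ (⊤ : ℕ∞) η D) (hζ : ContDiffOn ℝ (⊤ : ℕ∞) ζ D)
    (hflex : ∀ z ∈ D, FlexEqns f ξ η ζ z)
    (φ : ℝ → ℝ × ℝ → E3)
    (hφ : φ = fun t q => vec3 (q.1 + t * ξ q) (q.2 + t * η q) (f q + t * ζ q))
    (n : ℝ → ℝ × ℝ → E3)
    (hn : n = fun t q =>
      ‖cross3 (pu (φ t) q) (pv (φ t) q)‖⁻¹ • cross3 (pu (φ t) q) (pv (φ t) q))
    (m : ℝ × ℝ → E3)
    (hm : m = fun q => cross3 (deriv (fun t => n t q) 0) (n 0 q)) :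
    ∀ z ∈ D, m z = (1 + pu f z ^ 2 + pv f z ^ 2)⁻¹ •
      vec3 (pu f z * pv ξ z + pv f z * pv η z - pv ζ z)
        (-(pu f z * pu ξ z) - pv f z * pu η z + pu ζ z)
        (-((pu f z ^ 2 + pv f z ^ 2) * pu η z) + pv f z * pu ζ z
          - pu f z * (1 + pu f z ^ 2 + pv f z ^ 2) * pv ζ z) := by
  intro z hz
  obtain ⟨e1, e2', e3⟩ := hflex z hz
  have hfd : DifferentiableAt ℝ f z :=
    (hf.contDiffAt (hD.mem_nhds hz)).differentiableAt (by simp)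
  have hξd : DifferentiableAt ℝ ξ z :=
    (hξ.contDiffAt (hD.mem_nhds hz)).differentiableAt (by simp)
  have hηd : DifferentiableAt ℝ η z :=
    (hη.contDiffAt (hD.mem_nhds hz)).differentiableAt (by simp)
  have hζd : DifferentiableAt ℝ ζ z :=
    (hζ.contDiffAt (hD.mem_nhds hz)).differentiableAt (by simp)
  -- component fderivs
  have key1 : ∀ (g : ℝ × ℝ → ℝ), DifferentiableAt ℝ g z → ∀ (t : ℝ) (w : ℝ × ℝ),
      fderiv ℝ (fun q => q.1 + t * g q) z w = w.1 + t * fderiv ℝ g z w := by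
    intro g hg t w
    rw [HasFDerivAt.fderiv (f := fun q => q.1 + t * g q) (hasFDerivAt_fst.add (hg.hasFDerivAt.const_mul t))]
    simp
  have key2 : ∀ (g : ℝ × ℝ → ℝ), DifferentiableAt ℝ g z → ∀ (t : ℝ) (w : ℝ × ℝ),
      fderiv ℝ (fun q => q.2 + t * g q) z w = w.2 + t * fderiv ℝ g z w := by
    intro g hg t w
    rw [HasFDerivAt.fderiv (f := fun q => q.2 + t * g q) (hasFDerivAt_snd.add (hg.hasFDerivAt.const_mul t))]
    simp
  have key3 : ∀ (t : ℝ) (w : ℝ × ℝ),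
      fderiv ℝ (fun q => f q + t * ζ q) z w = fderiv ℝ f z w + t * fderiv ℝ ζ z w := by
    intro t w
    rw [HasFDerivAt.fderiv (f := fun q => f q + t * ζ q) (hfd.hasFDerivAt.add (hζd.hasFDerivAt.const_mul t))]
    simp
  have hpu : ∀ t : ℝ, pu (φ t) z
      = vec3 (1 + t * pu ξ z) (t * pu η z) (pu f z + t * pu ζ z) := by
    intro t
    simp only [hφ, pu]
    rw [fderiv_vec3_apply (a := fun q => q.1 + t * ξ q) (b := fun q => q.2 + t * η q)
        (c := fun q => f q + t * ζ q) (differentiableAt_fst.add (hξd.const_mul t))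
        (differentiableAt_snd.add (hηd.const_mul t)) (hfd.add (hζd.const_mul t)),
      key1 ξ hξd, key2 η hηd, key3]
    exact vec3_congr (by norm_num) (by norm_num) (by norm_num)
  have hpv : ∀ t : ℝ, pv (φ t) z
      = vec3 (t * pv ξ z) (1 + t * pv η z) (pv f z + t * pv ζ z) := by
    intro t
    simp only [hφ, pv]
    rw [fderiv_vec3_apply (a := fun q => q.1 + t * ξ q) (b := fun q => q.2 + t * η q)
        (c := fun q => f q + t * ζ q) (differentiableAt_fst.add (hξd.const_mul t))
        (differentiableAt_snd.add (hηd.const_mul t)) (hfd.add (hζd.const_mul t)),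
      key1 ξ hξd, key2 η hηd, key3]
    exact vec3_congr (by norm_num) (by norm_num) (by norm_num)
  set A := pu f z with hA
  set B := pv f z with hB
  set P := pu ξ z with hP
  set Q := pv ξ z with hQ
  set R := pu η z with hR
  set S := pv η z with hS
  set U := pu ζ z with hU
  set V := pv ζ z with hV
  set C : ℝ → E3 := fun t =>
    vec3 (-A + (R*B - U - A*S) * t + (R*V - U*S) * (t*t))
      (-B + (A*Q - V - P*B) * t + (U*Q - P*V) * (t*t))
      (1 + (P + S) * t + (P*S - R*Q) * (t*t)) with hCdef
  have hC : ∀ t : ℝ, cross3 (pu (φ t) z) (pv (φ t) z) = C t := by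
    intro t
    rw [hpu t, hpv t, cross3_vec3, hCdef]
    exact vec3_congr (by ring) (by ring) (by ring)
  have hC0 : C 0 = vec3 (-A) (-B) 1 := by
    rw [hCdef]
    exact vec3_congr (by ring) (by ring) (by ring)
  have hC0ne : C 0 ≠ 0 := by
    rw [hC0]
    intro h
    have h2 := congrArg (· 2) h
    simp at h2
  have hCd : HasDerivAt C (vec3 (R*B - U - A*S) (A*Q - V - P*B) (P + S)) 0 := by
    rw [hCdef]
    exact hasDerivAt_vec3 (hasDerivAt_quad _ _ _) (hasDerivAt_quad _ _ _)
      (hasDerivAt_quad _ _ _)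
  have hnz : ∀ t : ℝ, n t z = ‖C t‖⁻¹ • C t := by
    intro t
    simp only [hn]
    rw [hC t]
  have hm2 : m z = cross3 (deriv (fun t => ‖C t‖⁻¹ • C t) 0) (‖C 0‖⁻¹ • C 0) := by
    simp only [hm]
    rw [show (fun t => n t z) = fun t => ‖C t‖⁻¹ • C t from funext hnz, hnz 0]
  rw [hm2, m_formula C _ hCd hC0ne, hC0, norm_vec3_sq, cross3_vec3,
    show (-A)^2 + (-B)^2 + (1:ℝ)^2 = 1 + A^2 + B^2 by ring]
  congr 1
  refine vec3_congr (by ring) (by ring) ?_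
  linear_combination A^2 * e2' + A*B*e3 - A*B*e1
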